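/- arXiv:1207.0723 — 2 statements merged into one kernel-verified Lean document; each statement's English description precedes it below -/
import Mathlib

section
/- Fix an integer N ≥ 1, γ ∈ ℝ and λ ∈ ℂ^N with pairwise distinct coordinates. For μ ∈ ℂ^N with pairwise distinct coordinates set G^γ_μ := Π_{1 ≤ j < k ≤ N} (μ_j − μ_k − iγ)/(μ_j − μ_k), and define the Bethe wavefunction Ψ_λ : ℝ^N → ℂ by Ψ_λ(x) = (1/N!) Σ_{w ∈ S_N} G^γ_{wλ} exp(i Σ_{j=1}^N (wλ)_j (x↓)_j), where x↓ denotes the decreasing rearrangement of x and wλ is λ with coordinates permuted by w. Then Ψ_λ is a continuous S_N-invariant function, smooth on every alcove, which satisfies −Σ_{j=1}^N (∂_j² Ψ_λ)(x) = (Σ_{j=1}^N λ_j²) Ψ_λ(x) for every x ∈ ℝ^N_reg, and Ψ_λ satisfies the derivative jump conditions (with coupling γ). -/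
open scoped BigOperators
open MeasureTheory Complex

noncomputable section

abbrev Pt (N : ℕ) := Fin N → ℝ
abbrev Fn (N : ℕ) := Pt N → ℂ

/-- The permutation `w` acting on points: `(w • x) j = x (w⁻¹ j)`. -/
def permPt {N : ℕ} (w : Equiv.Perm (Fin N)) (x : Pt N) : Pt N := fun j => x (w⁻¹ j)

/-- The fundamental (positive) alcove `ℝ^N_+ = {x : x_1 > … > x_N}`. -/
def posAlcove (N : ℕ) : Set (Pt N) := {x | ∀ i j : Fin N, i < j → x j < x i}

/-- The alcove `w⁻¹ ℝ^N_+`. -/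
def alcove {N : ℕ} (w : Equiv.Perm (Fin N)) : Set (Pt N) := {x | permPt w x ∈ posAlcove N}

/-- Regular vectors: pairwise distinct coordinates. -/
def regPts (N : ℕ) : Set (Pt N) := {x | ∀ i j : Fin N, i ≠ j → x i ≠ x j}

/-- Partial derivative in the `j`-th coordinate. -/
def pd {N : ℕ} (j : Fin N) (f : Fn N) : Fn N :=
  fun x => deriv (fun t : ℝ => f (Function.update x j t)) (x j)

/-- The plane wave `e^{iλ}`. -/
def planeWave {N : ℕ} (lam : Fin N → ℂ) : Fn N :=
  fun x => Complex.exp (Complex.I * ∑ j, lam j * (x j : ℂ))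

/-- The integral operator `I_{jk}`:
`(I_{jk} f)(x) = ∫_0^{x_j-x_k} f(x - y(e_j - e_k)) dy`. -/
def Iop {N : ℕ} (j k : Fin N) (f : Fn N) : Fn N :=
  fun x => ∫ y in (0:ℝ)..(x j - x k),
    f (Function.update (Function.update x j (x j - y)) k (x k + y))

/-- The integral-reflection operator `s^γ` associated to the transposition `(j k)`. -/
def sIR {N : ℕ} (γ : ℝ) (j k : Fin N) (f : Fn N) : Fn N :=
  fun x => f (permPt (Equiv.swap j k) x) + (γ : ℂ) * Iop j k f x

/-- The integral-reflection operator for the simple transposition `s_j = (j, j+1)`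
(zero-based); identity for out-of-range `j`. -/
def sSimple {N : ℕ} (γ : ℝ) (j : ℕ) (f : Fn N) : Fn N :=
  if h : j + 1 < N then sIR γ ⟨j, Nat.lt_of_succ_lt h⟩ ⟨j + 1, h⟩ f else f

/-- `w^γ` computed from a word `L` of simple reflections:
`wordOp γ [i₁,…,i_l] f = s_{i₁}^γ (⋯ (s_{i_l}^γ f))`. -/
def wordOp {N : ℕ} (γ : ℝ) (L : List ℕ) (f : Fn N) : Fn N :=
  L.foldr (fun j g => sSimple γ j g) f

/-- The simple transposition `s_j` (zero-based); identity for out-of-range `j`. -/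
def simpleT (N : ℕ) (j : ℕ) : Equiv.Perm (Fin N) :=
  if h : j + 1 < N then Equiv.swap ⟨j, Nat.lt_of_succ_lt h⟩ ⟨j + 1, h⟩ else 1

/-- The permutation represented by a word of simple reflections. -/
def wordPerm (N : ℕ) (L : List ℕ) : Equiv.Perm (Fin N) := (L.map (simpleT N)).prod

/-- `P` is the propagation operator `P^γ_N`: for continuous `f`, `P f` is continuous and
on the alcove `w⁻¹ ℝ^N_+` it equals `(w^γ f)(w x)`, where `w^γ` may be computed from any
word of simple reflections representing `w` (the operators `s_j^γ` satisfy the relations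
of the symmetric group, so this does not depend on the word). -/
def IsPropagation {N : ℕ} (γ : ℝ) (P : Fn N → Fn N) : Prop :=
  ∀ f : Fn N, Continuous f →
    Continuous (P f) ∧
    ∀ (w : Equiv.Perm (Fin N)) (L : List ℕ),
      (∀ j ∈ L, j + 1 < N) → wordPerm N L = w →
      ∀ x ∈ alcove w, P f x = wordOp γ L f (permPt w x)

open scoped Classical in
/-- The operator `Λ_j` entering the Dunkl-type operator `∂_j^γ = ∂_j - γ Λ_j`. -/
def LambdaOp {N : ℕ} (j : Fin N) (f : Fn N) : Fn N := fun x =>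
  (∑ k : Fin N, if k < j ∧ x k < x j then f (permPt (Equiv.swap j k) x) else 0)
    - ∑ k : Fin N, if j < k ∧ x j < x k then f (permPt (Equiv.swap j k) x) else 0

/-- Membership in `CB^∞(ℝ^N)`: continuous, and smooth on every alcove. -/
def CBsmooth {N : ℕ} (f : Fn N) : Prop :=
  Continuous f ∧ ∀ w : Equiv.Perm (Fin N), ContDiffOn ℝ (⊤ : ℕ∞) f (alcove w)

/-- Membership in `sol^γ_λ`: lies in `CB^∞(ℝ^N)` and satisfies `∂_j^γ f = iλ_j f`
on the regular vectors for every `j`. -/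
def memSol {N : ℕ} (γ : ℝ) (lam : Fin N → ℂ) (f : Fn N) : Prop :=
  CBsmooth f ∧ ∀ j : Fin N, ∀ x ∈ regPts N,
    pd j f x - (γ : ℂ) * LambdaOp j f x = Complex.I * lam j * f x

open scoped Classical in
/-- Coxeter length = number of inversions. -/
def invCount {N : ℕ} (w : Equiv.Perm (Fin N)) : ℕ :=
  (Finset.univ.filter fun p : Fin N × Fin N => p.1 < p.2 ∧ w p.2 < w p.1).card

/-- `x + δ(e_j - e_k)`. -/
def jumpShift {N : ℕ} (j k : Fin N) (δ : ℝ) (x : Pt N) : Pt N :=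
  Function.update (Function.update x j (x j + δ)) k (x k - δ)

/-- The derivative jump conditions with coupling `γ`: at every subregular point of
every wall `{x_j = x_k}` (`j < k`), the jump of `(∂_j - ∂_k) f` equals `2γ f(x)`. -/
def SatisfiesJump {N : ℕ} (γ : ℝ) (f : Fn N) : Prop :=
  ∀ j k : Fin N, j < k → ∀ x : Pt N, x j = x k →
    (∀ l m : Fin N, l < m → ¬(l = j ∧ m = k) → x l ≠ x m) →
    Filter.Tendsto
      (fun δ : ℝ =>
        (pd j f (jumpShift j k δ x) - pd k f (jumpShift j k δ x))
          - (pd j f (jumpShift j k (-δ) x) - pd k f (jumpShift j k (-δ) x)))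
      (nhdsWithin 0 (Set.Ioi 0)) (nhds (2 * (γ : ℂ) * f x))

open scoped Classical in
/-- Indicator of a strictly decreasing chain of real numbers. -/
def chainInd (l : List ℝ) : ℂ := if List.Chain' (fun a b => b < a) l then 1 else 0

/-- Iterated integral entering `ê⁻_{μ;i}`: for the list `[i₁,…,i_n]`, the upper limit of
the `y_m`-integral is `x_{i_{m-1}}` (threaded through `ub`, starting at `x_{N+1}`), the lower
limit is `x_{i_m}`, and the coordinate `i_m` of the argument is replaced by `y_m`. -/
def eMinusAux {N : ℕ} (μ : ℂ) (f : Fn N) (x : Pt (N + 1)) :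
    List (Fin N) → ℝ → Pt N → ℂ
  | [], _, z => f z
  | i :: rest, ub, z =>
      ∫ y in (x i.castSucc)..ub,
        Complex.exp (Complex.I * μ * ((x i.castSucc - y : ℝ) : ℂ)) *
          eMinusAux μ f x rest (x i.castSucc) (Function.update z i y)

/-- The elementary creation operator `ê⁻_{μ;i}`. -/
def ehatMinus {N : ℕ} (μ : ℂ) (l : List (Fin N)) (f : Fn N) : Fn (N + 1) :=
  fun x =>
    chainInd (x (Fin.last N) :: l.map fun i => x i.castSucc) *
      Complex.exp (Complex.I * μ * ((x (Fin.last N) : ℝ) : ℂ)) *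
      eMinusAux μ f x l (x (Fin.last N)) (fun j => x j.castSucc)

/-- Iterated integral entering `ê⁺_{μ;i}`: the lower limit of the `y_m`-integral is
`x_{i_{m+1}+1}` (the coordinate of the next entry, or `x_1` at the end), the upper limit
is `x_{i_m+1}`, and the coordinate `i_m` of the argument is replaced by `y_m`. -/
def ePlusAux {N : ℕ} (μ : ℂ) (f : Fn N) (x : Pt (N + 1)) :
    List (Fin N) → Pt N → ℂ
  | [], z => f z
  | i :: rest, z =>
      ∫ y in (match rest with
              | [] => x 0
              | j :: _ => x j.succ)..(x i.succ),
        Complex.exp (Complex.I * μ * ((x i.succ - y : ℝ) : ℂ)) *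
          ePlusAux μ f x rest (Function.update z i y)

/-- The elementary creation operator `ê⁺_{μ;i}`. -/
def ehatPlus {N : ℕ} (μ : ℂ) (l : List (Fin N)) (f : Fn N) : Fn (N + 1) :=
  fun x =>
    chainInd ((l.map fun i => x i.succ) ++ [x 0]) *
      Complex.exp (Complex.I * μ * ((x 0 : ℝ) : ℂ)) *
      ePlusAux μ f x l (fun j => x j.succ)

/-- The non-symmetric creation operator
`b⁻_μ = ∑_{n=0}^N γⁿ ∑_{i ∈ 𝔦ⁿ_{[1,N]}} ê⁻_{μ;i}` (tuples of pairwise distinct indices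
are encoded as injections `Fin n ↪ Fin N`). -/
def bMinus {N : ℕ} (γ : ℝ) (μ : ℂ) (f : Fn N) : Fn (N + 1) :=
  fun x => ∑ n ∈ Finset.range (N + 1), (γ : ℂ) ^ n *
    ∑ e : Fin n ↪ Fin N, ehatMinus μ (List.ofFn ⇑e) f x

/-- The non-symmetric creation operator `b⁺_μ`. -/
def bPlus {N : ℕ} (γ : ℝ) (μ : ℂ) (f : Fn N) : Fn (N + 1) :=
  fun x => ∑ n ∈ Finset.range (N + 1), (γ : ℂ) ^ n *
    ∑ e : Fin n ↪ Fin N, ehatPlus μ (List.ofFn ⇑e) f x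

/-- `φ̌⁺`: evaluate the first coordinate at `x⁺`. -/
def phiCheckPlus {k : ℕ} (xp : ℝ) (f : Fn (k + 1)) : Fn k := fun x => f (Fin.cons xp x)

/-- `φ̌⁻`: evaluate the last coordinate at `x⁻`. -/
def phiCheckMinus {k : ℕ} (xm : ℝ) (f : Fn (k + 1)) : Fn k := fun x => f (Fin.snoc x xm)

/-- `b^ε_μ`, `ε = +` encoded as `true` and `ε = -` as `false`. -/
def bEps (ε : Bool) {k : ℕ} (γ : ℝ) (μ : ℂ) (f : Fn k) : Fn (k + 1) :=
  if ε then bPlus γ μ f else bMinus γ μ f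

/-- `ê^ε_{μ;i}`. -/
def ehatEps (ε : Bool) {N : ℕ} (μ : ℂ) (l : List (Fin N)) (f : Fn N) : Fn (N + 1) :=
  if ε then ehatPlus μ l f else ehatMinus μ l f

/-- `φ̌^ε`. -/
def phiEps (ε : Bool) {k : ℕ} (xp xm : ℝ) (f : Fn (k + 1)) : Fn k :=
  if ε then phiCheckPlus xp f else phiCheckMinus xm f

/-- `a^ε_μ = φ̌^ε ∘ b^ε_μ`. -/
def aEps (ε : Bool) {k : ℕ} (γ : ℝ) (xp xm : ℝ) (μ : ℂ) (f : Fn k) : Fn k :=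
  phiEps ε xp xm (bEps ε γ μ f)

/-- The sign `ε = ±1` of `ε ∈ {+,-}`. -/
def sgn (ε : Bool) : ℂ := if ε then 1 else -1

/-- `s⁺` (swap of the first two coordinates of `ℝ^{N+2}`) resp. `s⁻` (swap of the last two). -/
def sEps (ε : Bool) (N : ℕ) : Equiv.Perm (Fin (N + 2)) :=
  if ε then Equiv.swap 0 1 else Equiv.swap ⟨N, by omega⟩ ⟨N + 1, by omega⟩

/-- Iterated integral entering `č⁺_{μ;i}` (the variables `y_1,…,y_n`). -/
def cAuxPlus {N : ℕ} (μ : ℂ) (xp : ℝ) (x : Pt N) (g : Pt N → ℂ) :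
    List (Fin N) → Pt N → ℂ
  | [], z => g z
  | i :: rest, z =>
      ∫ y in (match rest with | [] => xp | j :: _ => x j)..(x i),
        Complex.exp (Complex.I * μ * ((x i - y : ℝ) : ℂ)) *
          cAuxPlus μ xp x g rest (Function.update z i y)

/-- The elementary operator `č⁺_{μ;i}` (with `x_{i_0} := x⁻` and `x_{i_{n+1}} := x⁺`;
the variable `y_0` is plugged in as the final argument of `f`). -/
def cCheckPlus {N : ℕ} (μ : ℂ) (xp xm : ℝ) (l : List (Fin N)) (f : Fn (N + 1)) : Fn N :=
  fun x =>
    chainInd (l.map x) * Complex.exp (Complex.I * μ * ((xp : ℝ) : ℂ)) *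
      ∫ y0 in (match l with | [] => xp | i :: _ => x i)..xm,
        Complex.exp (Complex.I * μ * ((xm - y0 : ℝ) : ℂ)) *
          cAuxPlus μ xp x (fun z => f (Fin.snoc z y0)) l x

/-- Iterated integral entering `č⁻_{μ;i}` (the variables `y_1,…,y_{n+1}`;
the variable `y_{n+1}` is plugged in as the first argument of `f`). -/
def cAuxMinus {N : ℕ} (μ : ℂ) (xp : ℝ) (x : Pt N) (f : Fn (N + 1)) :
    List (Fin N) → ℝ → Pt N → ℂ
  | [], ub, z =>
      ∫ y in xp..ub, Complex.exp (Complex.I * μ * ((xp - y : ℝ) : ℂ)) * f (Fin.cons y z)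
  | i :: rest, ub, z =>
      ∫ y in (x i)..ub,
        Complex.exp (Complex.I * μ * ((x i - y : ℝ) : ℂ)) *
          cAuxMinus μ xp x f rest (x i) (Function.update z i y)

/-- The elementary operator `č⁻_{μ;i}` (with `x_{i_0} := x⁻` and `x_{i_{n+1}} := x⁺`). -/
def cCheckMinus {N : ℕ} (μ : ℂ) (xp xm : ℝ) (l : List (Fin N)) (f : Fn (N + 1)) : Fn N :=
  fun x => chainInd (l.map x) * Complex.exp (Complex.I * μ * ((xm : ℝ) : ℂ)) *
    cAuxMinus μ xp x f l xm x

/-- `č^ε_{μ;i}`. -/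
def cCheckEps (ε : Bool) {N : ℕ} (μ : ℂ) (xp xm : ℝ) (l : List (Fin N)) (f : Fn (N + 1)) :
    Fn N :=
  if ε then cCheckPlus μ xp xm l f else cCheckMinus μ xp xm l f

/-- The operator `c⁺_μ = ∑_{n=0}^N γ^{n+1} ∑_i č⁺_{μ;i}`. -/
def cPlusOp {N : ℕ} (γ : ℝ) (μ : ℂ) (xp xm : ℝ) (f : Fn (N + 1)) : Fn N :=
  fun x => ∑ n ∈ Finset.range (N + 1), (γ : ℂ) ^ (n + 1) *
    ∑ e : Fin n ↪ Fin N, cCheckPlus μ xp xm (List.ofFn ⇑e) f x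

/-- The operator `c⁻_μ = ∑_{n=0}^N γ^{n+1} ∑_i č⁻_{μ;i}`. -/
def cMinusOp {N : ℕ} (γ : ℝ) (μ : ℂ) (xp xm : ℝ) (f : Fn (N + 1)) : Fn N :=
  fun x => ∑ n ∈ Finset.range (N + 1), (γ : ℂ) ^ (n + 1) *
    ∑ e : Fin n ↪ Fin N, cCheckMinus μ xp xm (List.ofFn ⇑e) f x

/-- `c^ε_μ`. -/
def cEps (ε : Bool) {N : ℕ} (γ : ℝ) (μ : ℂ) (xp xm : ℝ) (f : Fn (N + 1)) : Fn N :=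
  if ε then cPlusOp γ μ xp xm f else cMinusOp γ μ xp xm f

/-- The closed box `J^M = [x⁺,x⁻]^M`. -/
def box (M : ℕ) (xp xm : ℝ) : Set (Pt M) := {x | ∀ j, x j ∈ Set.Icc xp xm}

/-- The `L²(J^M)` inner product `⟨u,v⟩_M = ∫_{J^M} u · conj v`. -/
def ipJ {M : ℕ} (xp xm : ℝ) (u v : Fn M) : ℂ :=
  ∫ x in box M xp xm, u x * (starRingEnd ℂ) (v x)

/-- Smooth functions compactly supported in the open box `(x⁺,x⁻)^M`. -/
def IsTestFn {M : ℕ} (xp xm : ℝ) (f : Fn M) : Prop :=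
  ContDiff ℝ (⊤ : ℕ∞) f ∧ HasCompactSupport f ∧ ∀ x, f x ≠ 0 → ∀ j, x j ∈ Set.Ioo xp xm

/-- The symmetrizer `𝒮_N = (1/N!) ∑_{w ∈ S_N} w`. -/
def symN (N : ℕ) (f : Fn N) : Fn N :=
  fun x => (N.factorial : ℂ)⁻¹ * ∑ w : Equiv.Perm (Fin N), f (permPt w⁻¹ x)

open scoped Classical in
/-- `G^γ_μ = ∏_{j<k} (μ_j - μ_k - iγ)/(μ_j - μ_k)`. -/
def Gcoef {N : ℕ} (γ : ℝ) (mu : Fin N → ℂ) : ℂ :=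
  ∏ p ∈ Finset.univ.filter (fun p : Fin N × Fin N => p.1 < p.2),
    (mu p.1 - mu p.2 - Complex.I * (γ : ℂ)) / (mu p.1 - mu p.2)

/-- The decreasing rearrangement `x↓`. -/
def decRearrange {N : ℕ} (x : Pt N) : Pt N := fun j => x (Tuple.sort x (Fin.rev j))

/-- The Bethe wavefunction
`Ψ_λ(x) = (1/N!) ∑_{w ∈ S_N} G^γ_{wλ} exp(i ∑_j (wλ)_j (x↓)_j)`. -/
def Bethe {N : ℕ} (γ : ℝ) (lam : Fin N → ℂ) : Fn N :=
  fun x => (N.factorial : ℂ)⁻¹ * ∑ w : Equiv.Perm (Fin N),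
    Gcoef γ (fun j => lam (w⁻¹ j)) *
      Complex.exp (Complex.I * ∑ j, lam (w⁻¹ j) * ((decRearrange x j : ℝ) : ℂ))

/-- The transpositions of consecutive entries of a list:
`adjSwaps [a₁,…,a_m] = [(a₁ a₂), (a₂ a₃), …, (a_{m-1} a_m)]`. -/
def adjSwaps {M : ℕ} : List (Fin M) → List (Equiv.Perm (Fin M))
  | [] => []
  | [_] => []
  | a :: b :: rest => Equiv.swap a b :: adjSwaps (b :: rest)

/-- `b⁻_{λ_N} (b⁻_{λ_{N-1}} (⋯ (b⁻_{λ_1} 1)))`. -/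
def iterBMinus (γ : ℝ) : (N : ℕ) → (Fin N → ℂ) → Fn N
  | 0, _ => fun _ => 1
  | N + 1, lam => bMinus γ (lam (Fin.last N)) (iterBMinus γ N (fun j => lam j.castSucc))

/-- `b⁺_{λ_1} (b⁺_{λ_2} (⋯ (b⁺_{λ_N} 1)))`. -/
def iterBPlus (γ : ℝ) : (N : ℕ) → (Fin N → ℂ) → Fn N
  | 0, _ => fun _ => 1
  | N + 1, lam => bPlus γ (lam 0) (iterBPlus γ N (fun j => lam j.succ))

/-!
`Ψ_λ = F ∘ (·)↓`, where `F = betheWave γ λ` is a finite sum of plane waves `e^{i⟨wλ, x⟩}`, each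
an eigenfunction of `-Δ` with eigenvalue `∑ λ_j²`. On the closure of the alcove `w⁻¹ ℝ^N_+` the
rearrangement `x↓` is the linear map `x ↦ wx`; since the closed alcoves cover `ℝ^N`, this gives
continuity, smoothness on alcoves and the Helmholtz equation.

For the jump conditions, `S_N`-invariance turns the jump across `{x_j = x_k}` into twice the
one-sided limit of `(∂_j - ∂_k) Ψ_λ` from the side `x_j > x_k`. There `Ψ_λ = F ∘ w` for one `w`
in which `j` and `k` are adjacent, `w j = p`, `w k = p + 1`, so the limit is
`(∂_p - ∂_{p+1}) F (z)` at a point with `z_p = z_{p+1}`. Pairing the terms of `w` and `(p p+1) w`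
in that sum, the factor `(μ_p - μ_{p+1} - iγ)/(μ_p - μ_{p+1})` of `G^γ_μ` turns it into `γ F(z)`.
-/

open Filter Topology
open scoped ContDiff

section Rearrangement

variable {N : ℕ}

lemma permPt_permPt (v w : Equiv.Perm (Fin N)) (x : Pt N) :
    permPt v (permPt w x) = permPt (v * w) x := by
  unfold permPt
  rw [mul_inv_rev]
  rfl

lemma antitone_decRearrange (x : Pt N) : Antitone (decRearrange x) :=
  (Tuple.monotone_sort x).comp_antitone fun _ _ h => Fin.rev_le_rev.mpr h

lemma decRearrange_eq_permPt {w : Equiv.Perm (Fin N)} {x : Pt N}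
    (h : Antitone (permPt w x)) : decRearrange x = permPt w x :=
  Tuple.unique_antitone (σ := Fin.revPerm.trans (Tuple.sort x)) (antitone_decRearrange x) h

lemma exists_antitone_permPt (x : Pt N) : ∃ w : Equiv.Perm (Fin N), Antitone (permPt w x) :=
  ⟨(Fin.revPerm.trans (Tuple.sort x))⁻¹, by
    unfold permPt; rw [inv_inv]; exact antitone_decRearrange x⟩

lemma decRearrange_permPt (w : Equiv.Perm (Fin N)) (x : Pt N) :
    decRearrange (permPt w x) = decRearrange x := by
  obtain ⟨v, hv⟩ := exists_antitone_permPt (permPt w x)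
  have hv' : Antitone (permPt (v * w) x) := by rwa [permPt_permPt] at hv
  rw [decRearrange_eq_permPt hv, decRearrange_eq_permPt hv', permPt_permPt]

lemma continuous_permPt (w : Equiv.Perm (Fin N)) : Continuous (permPt w) :=
  continuous_pi fun _ => continuous_apply _

lemma isClosed_setOf_antitone_permPt (w : Equiv.Perm (Fin N)) :
    IsClosed {x : Pt N | Antitone (permPt w x)} := by
  simp only [Antitone, Set.ofPred_forall]
  exact isClosed_iInter fun a => isClosed_iInter fun b => isClosed_iInter fun _ =>
    isClosed_le (continuous_apply _) (continuous_apply _)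

lemma continuous_decRearrange : Continuous (decRearrange : Pt N → Pt N) := by
  refine (locallyFinite_of_finite fun w : Equiv.Perm (Fin N) => {x | Antitone (permPt w x)})
    |>.continuous ?_ isClosed_setOf_antitone_permPt fun w => ?_
  · exact Set.eq_univ_of_forall fun x => Set.mem_iUnion.mpr (exists_antitone_permPt x)
  · exact (continuous_permPt w).continuousOn.congr fun x hx => decRearrange_eq_permPt hx

lemma isOpen_alcove (w : Equiv.Perm (Fin N)) : IsOpen (alcove w) := by
  have : alcove w = ⋂ (a : Fin N) (b : Fin N) (_ : a < b), {x | x (w⁻¹ b) < x (w⁻¹ a)} := by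
    ext x; simp [alcove, posAlcove, permPt]
  rw [this]
  exact isOpen_iInter_of_finite fun a => isOpen_iInter_of_finite fun b =>
    isOpen_iInter_of_finite fun _ => isOpen_lt (continuous_apply _) (continuous_apply _)

lemma exists_mem_alcove {x : Pt N} (hx : Function.Injective x) :
    ∃ w : Equiv.Perm (Fin N), x ∈ alcove w := by
  obtain ⟨w, hw⟩ := exists_antitone_permPt x
  exact ⟨w, hw.strictAnti_of_injective (hx.comp (Equiv.injective _))⟩

lemma mem_alcove_of_lt_iff {w : Equiv.Perm (Fin N)} {x y : Pt N}
    (hxy : ∀ a b, x a < x b ↔ y a < y b) (hx : x ∈ alcove w) : y ∈ alcove w :=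
  fun a b hab => (hxy _ _).mp (hx a b hab)

end Rearrangement

section PartialDerivatives

variable {N : ℕ}

lemma pd_congr_of_eventuallyEq {f g : Fn N} {x : Pt N} (h : f =ᶠ[𝓝 x] g) (j : Fin N) :
    pd j f x = pd j g x := by
  have hupdate : Tendsto (fun t : ℝ => Function.update x j t) (𝓝 (x j)) (𝓝 x) := by
    simpa using ((continuous_const.update j continuous_id).tendsto (x j) :
      Tendsto (fun t : ℝ => Function.update x j t) _ _)
  exact (h.comp_tendsto hupdate).deriv_eq

lemma pd_eventuallyEq {f g : Fn N} {x : Pt N} (h : f =ᶠ[𝓝 x] g) (j : Fin N) :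
    pd j f =ᶠ[𝓝 x] pd j g :=
  h.eventuallyEq_nhds.mono fun _ hy => pd_congr_of_eventuallyEq hy j

lemma permPt_update (σ : Equiv.Perm (Fin N)) (y : Pt N) (j : Fin N) (t : ℝ) :
    permPt σ (Function.update y j t) = Function.update (permPt σ y) (σ j) t := by
  ext m
  simp only [permPt, Function.update_apply, Equiv.Perm.inv_eq_iff_eq]

lemma pd_comp_permPt (f : Fn N) (σ : Equiv.Perm (Fin N)) (j : Fin N) :
    pd j (f ∘ permPt σ) = pd (σ j) f ∘ permPt σ := by
  ext y
  simp only [pd, Function.comp_apply, permPt_update]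
  congr 1
  simp [permPt]

lemma pd_of_permPt_invariant {f : Fn N} {σ : Equiv.Perm (Fin N)}
    (hf : ∀ y, f (permPt σ y) = f y) (j : Fin N) (y : Pt N) :
    pd j f y = pd (σ j) f (permPt σ y) := by
  have h := congrFun (pd_comp_permPt f σ j) y
  rwa [show f ∘ permPt σ = f from funext hf] at h

end PartialDerivatives

section PlaneWaves

variable {N : ℕ}

lemma planeWave_permPt (μ : Fin N → ℂ) (w : Equiv.Perm (Fin N)) (x : Pt N) :
    planeWave μ (permPt w x) = planeWave (fun j => μ (w j)) x := by
  unfold planeWave permPt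
  congr 2
  exact (Equiv.sum_comp w _).symm.trans (by simp)

lemma hasDerivAt_planeWave_update (μ : Fin N → ℂ) (x : Pt N) (j : Fin N) :
    HasDerivAt (fun t : ℝ => planeWave μ (Function.update x j t))
      (Complex.I * μ j * planeWave μ x) (x j) := by
  have hphase : HasDerivAt (fun t : ℝ => ∑ m, μ m * ((Function.update x j t m : ℝ) : ℂ))
      (∑ m, if m = j then μ m else 0) (x j) := by
    refine HasDerivAt.fun_sum fun m _ => ?_
    by_cases hm : m = j
    · subst hm
      simpa using (hasDerivAt_id (x m)).ofReal_comp.const_mul (μ m)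
    · simpa [Function.update_of_ne hm, hm] using hasDerivAt_const (x j) (μ m * (x m : ℂ))
  have := (hphase.const_mul Complex.I).cexp
  simpa [planeWave, mul_comm, mul_left_comm, mul_assoc] using this

def waveSum {ι : Type*} [Fintype ι] (c : ι → ℂ) (μ : ι → Fin N → ℂ) : Fn N :=
  fun x => ∑ i, c i * planeWave (μ i) x

variable {ι : Type*} [Fintype ι]

lemma contDiff_planeWave (μ : Fin N → ℂ) : ContDiff ℝ ω (planeWave μ) :=
  Complex.contDiff_exp.comp (contDiff_const.mul (ContDiff.sum fun j _ =>
    contDiff_const.mul (Complex.ofRealCLM.contDiff.comp (contDiff_apply ℝ ℝ j))))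

lemma contDiff_waveSum (c : ι → ℂ) (μ : ι → Fin N → ℂ) : ContDiff ℝ ω (waveSum c μ) :=
  ContDiff.sum fun i _ => contDiff_const.mul (contDiff_planeWave (μ i))

lemma pd_waveSum (c : ι → ℂ) (μ : ι → Fin N → ℂ) (j : Fin N) :
    pd j (waveSum c μ) = waveSum (fun i => Complex.I * μ i j * c i) μ := by
  ext x
  refine (HasDerivAt.fun_sum fun i _ =>
    (hasDerivAt_planeWave_update (μ i) x j).const_mul (c i)).deriv.trans ?_
  simp only [waveSum]
  exact Finset.sum_congr rfl fun i _ => by ring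

lemma sum_pd_pd_waveSum (c : ι → ℂ) (μ : ι → Fin N → ℂ) {s : ℂ}
    (hμ : ∀ i, ∑ m, μ i m ^ 2 = s) (x : Pt N) :
    ∑ m, pd m (pd m (waveSum c μ)) x = -s * waveSum c μ x := by
  simp only [pd_waveSum, waveSum, Finset.mul_sum]
  rw [Finset.sum_comm]
  refine Finset.sum_congr rfl fun i _ => ?_
  rw [← hμ i, neg_mul, Finset.sum_mul, ← Finset.sum_neg_distrib]
  refine Finset.sum_congr rfl fun m _ => ?_
  linear_combination (μ i m ^ 2 * c i * planeWave (μ i) x) * Complex.I_sq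

end PlaneWaves

section BetheWave

variable {N : ℕ} (γ : ℝ) (lam : Fin N → ℂ)

def betheWave : Fn N :=
  waveSum (fun u : Equiv.Perm (Fin N) => (N.factorial : ℂ)⁻¹ * Gcoef γ (fun j => lam (u⁻¹ j)))
    (fun u j => lam (u⁻¹ j))

lemma Bethe_eq_betheWave_decRearrange (x : Pt N) :
    Bethe γ lam x = betheWave γ lam (decRearrange x) := by
  simp only [Bethe, betheWave, waveSum, planeWave, Finset.mul_sum, mul_assoc]

variable {γ lam}

lemma Bethe_eq_betheWave_permPt {w : Equiv.Perm (Fin N)} {x : Pt N}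
    (h : Antitone (permPt w x)) : Bethe γ lam x = betheWave γ lam (permPt w x) := by
  rw [Bethe_eq_betheWave_decRearrange, decRearrange_eq_permPt h]

lemma Bethe_eventuallyEq_of_mem_alcove {w : Equiv.Perm (Fin N)} {x : Pt N}
    (hx : x ∈ alcove w) : Bethe γ lam =ᶠ[𝓝 x] betheWave γ lam ∘ permPt w :=
  eventually_of_mem ((isOpen_alcove w).mem_nhds hx) fun _ hy =>
    Bethe_eq_betheWave_permPt (StrictAnti.antitone hy)

variable (γ lam)

lemma continuous_Bethe : Continuous (Bethe γ lam) := by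
  rw [show Bethe γ lam = betheWave γ lam ∘ decRearrange from
    funext (Bethe_eq_betheWave_decRearrange γ lam)]
  exact (contDiff_waveSum _ _).continuous.comp continuous_decRearrange

lemma Bethe_permPt (w : Equiv.Perm (Fin N)) (x : Pt N) :
    Bethe γ lam (permPt w x) = Bethe γ lam x := by
  rw [Bethe_eq_betheWave_decRearrange, Bethe_eq_betheWave_decRearrange, decRearrange_permPt]

lemma contDiffOn_Bethe_alcove (w : Equiv.Perm (Fin N)) :
    ContDiffOn ℝ (⊤ : ℕ∞) (Bethe γ lam) (alcove w) :=
  ((contDiff_waveSum _ _).comp (contDiff_pi.mpr fun j => contDiff_apply ℝ ℝ (w⁻¹ j))).of_le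
    le_top |>.contDiffOn.congr fun _ hy => Bethe_eq_betheWave_permPt (StrictAnti.antitone hy)

lemma Bethe_helmholtz {x : Pt N} (hx : x ∈ regPts N) :
    -(∑ j, pd j (pd j (Bethe γ lam)) x) = (∑ j, lam j ^ 2) * Bethe γ lam x := by
  obtain ⟨w, hw⟩ := exists_mem_alcove (Function.injective_iff_pairwise_ne.mpr hx)
  have hpd : ∀ j, pd j (pd j (Bethe γ lam)) x
      = pd (w j) (pd (w j) (betheWave γ lam)) (permPt w x) := fun j => by
    rw [pd_congr_of_eventuallyEq (pd_eventuallyEq (Bethe_eventuallyEq_of_mem_alcove hw) j) j,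
      pd_comp_permPt, pd_comp_permPt]
    rfl
  have hfreq : ∀ u : Equiv.Perm (Fin N), ∑ m, lam (u⁻¹ m) ^ 2 = ∑ m, lam m ^ 2 := fun u =>
    Equiv.sum_comp u⁻¹ (fun m => lam m ^ 2)
  simp only [hpd]
  rw [Equiv.sum_comp w (fun m => pd m (pd m (betheWave γ lam)) (permPt w x)), betheWave,
    sum_pd_pd_waveSum _ _ hfreq, ← betheWave, ← Bethe_eq_betheWave_permPt (StrictAnti.antitone hw)]
  ring

end BetheWave

section JumpIdentity

variable {N : ℕ}

lemma swap_lt_swap_of_adjacent {q q' a b : Fin N} (hq : (q' : ℕ) = q + 1) (hab : a < b)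
    (hne : (a, b) ≠ (q, q')) : Equiv.swap q q' a < Equiv.swap q q' b := by
  rw [Equiv.swap_apply_def, Equiv.swap_apply_def]
  simp only [ne_eq, Prod.mk.injEq, Fin.ext_iff] at hne
  rw [Fin.lt_def] at hab
  split_ifs <;> simp only [Fin.lt_def, Fin.ext_iff] at * <;> omega

lemma permPt_swap_of_eq {p p' : Fin N} {z : Pt N} (hz : z p = z p') :
    permPt (Equiv.swap p p') z = z := by
  ext m
  simp only [permPt, Equiv.swap_inv, Equiv.swap_apply_def]
  split_ifs <;> simp_all

open scoped Classical in
/-- Swapping adjacent entries `q, q + 1` of `ν` changes only the factor of the pair `(q, q + 1)`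
in `G^γ_ν`. -/
lemma Gcoef_mul_swap (γ : ℝ) {ν : Fin N → ℂ} (hν : Function.Injective ν) {q q' : Fin N}
    (hq : (q' : ℕ) = q + 1) :
    Gcoef γ ν * (ν q - ν q' + Complex.I * γ)
      = Gcoef γ (fun m => ν (Equiv.swap q q' m)) * (ν q - ν q' - Complex.I * γ) := by
  set s := Equiv.swap q q'
  set P := Finset.univ.filter fun p : Fin N × Fin N => p.1 < p.2
  have hqq' : q < q' := by rw [Fin.lt_def]; omega
  have hqP : (q, q') ∈ P := by simp [P, hqq']
  have hmaps : ∀ p ∈ P.erase (q, q'), (s p.1, s p.2) ∈ P.erase (q, q') := by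
    intro p hp
    obtain ⟨hpq, hpP⟩ := Finset.mem_erase.mp hp
    have hlt : p.1 < p.2 := (Finset.mem_filter.mp hpP).2
    refine Finset.mem_erase.mpr ⟨fun h => ?_, by simpa [P] using swap_lt_swap_of_adjacent hq hlt hpq⟩
    have h1 : p.1 = q' := by simpa [s] using congrArg (s ∘ Prod.fst) h
    have h2 : p.2 = q := by simpa [s] using congrArg (s ∘ Prod.snd) h
    exact absurd hqq' (not_lt.mpr (h1 ▸ h2 ▸ hlt.le))
  have hrest : ∏ p ∈ P.erase (q, q'), (ν (s p.1) - ν (s p.2) - Complex.I * γ) / (ν (s p.1) - ν (s p.2))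
      = ∏ p ∈ P.erase (q, q'), (ν p.1 - ν p.2 - Complex.I * γ) / (ν p.1 - ν p.2) :=
    Finset.prod_nbij' (fun p => (s p.1, s p.2)) (fun p => (s p.1, s p.2)) hmaps hmaps
      (fun p _ => by simp [s]) (fun p _ => by simp [s]) (fun p _ => by simp [s])
  rw [Gcoef, Gcoef, ← Finset.mul_prod_erase P _ hqP, ← Finset.mul_prod_erase P _ hqP, hrest]
  have hd : ν q - ν q' ≠ 0 := sub_ne_zero.mpr (hν.ne hqq'.ne)
  have hd' : ν q' - ν q ≠ 0 := sub_ne_zero.mpr (hν.ne hqq'.ne')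
  simp only [s, Equiv.swap_apply_left, Equiv.swap_apply_right]
  field_simp
  ring

lemma sum_jump_term_eq_zero (γ : ℝ) {lam : Fin N → ℂ} (hlam : Function.Injective lam)
    {p p' : Fin N} (hp : (p' : ℕ) = p + 1) {z : Pt N} (hz : z p = z p') :
    ∑ u : Equiv.Perm (Fin N), (Complex.I * (lam (u⁻¹ p) - lam (u⁻¹ p')) - γ) *
      (Gcoef γ (fun m => lam (u⁻¹ m)) * planeWave (fun m => lam (u⁻¹ m)) z) = 0 := by
  set s := Equiv.swap p p'
  have hpp' : p ≠ p' := fun h => by simp [h] at hp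
  refine Finset.sum_ninvolution (s * ·) (fun u => ?_) (fun u _ => ?_) (fun _ => Finset.mem_univ _)
    (fun u => Equiv.swap_mul_self_mul p p' u)
  · have hinv : ∀ m, (s * u)⁻¹ m = u⁻¹ (s m) := fun m => by simp [s, mul_inv_rev]
    have hwave : planeWave (fun m => lam (u⁻¹ (s m))) z = planeWave (fun m => lam (u⁻¹ m)) z := by
      have h := planeWave_permPt (fun m => lam (u⁻¹ m)) s z
      rwa [permPt_swap_of_eq hz, eq_comm] at h
    have hG := Gcoef_mul_swap γ (ν := fun m => lam (u⁻¹ m)) (hlam.comp (u⁻¹).injective) hp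
    simp only [hinv, hwave, s, Equiv.swap_apply_left, Equiv.swap_apply_right] at hG ⊢
    linear_combination (Complex.I * planeWave (fun m => lam (u⁻¹ m)) z) * hG
      - (γ * planeWave (fun m => lam (u⁻¹ m)) z * (Gcoef γ (fun m => lam (u⁻¹ m))
        + Gcoef γ (fun m => lam (u⁻¹ (Equiv.swap p p' m))))) * Complex.I_sq
  · simpa [s] using hpp'

lemma pd_sub_pd_betheWave (γ : ℝ) {lam : Fin N → ℂ} (hlam : Function.Injective lam)
    {p p' : Fin N} (hp : (p' : ℕ) = p + 1) {z : Pt N} (hz : z p = z p') :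
    pd p (betheWave γ lam) z - pd p' (betheWave γ lam) z = γ * betheWave γ lam z := by
  rw [← sub_eq_zero]
  calc _ = (N.factorial : ℂ)⁻¹ * ∑ u : Equiv.Perm (Fin N),
        (Complex.I * (lam (u⁻¹ p) - lam (u⁻¹ p')) - γ) *
          (Gcoef γ (fun m => lam (u⁻¹ m)) * planeWave (fun m => lam (u⁻¹ m)) z) := by
        simp only [betheWave, pd_waveSum, waveSum, Finset.mul_sum, ← Finset.sum_sub_distrib]
        exact Finset.sum_congr rfl fun u _ => by ring
    _ = 0 := by rw [sum_jump_term_eq_zero γ hlam hp hz, mul_zero]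

end JumpIdentity
section Jump

variable {N : ℕ} {j k : Fin N} {x : Pt N}

lemma jumpShift_apply_left (hjk : j ≠ k) (δ : ℝ) : jumpShift j k δ x j = x j + δ := by
  simp [jumpShift, hjk]

lemma jumpShift_apply_right (δ : ℝ) : jumpShift j k δ x k = x k - δ := by
  simp [jumpShift]

lemma jumpShift_apply_of_ne {c : Fin N} (hj : c ≠ j) (hk : c ≠ k) (δ : ℝ) :
    jumpShift j k δ x c = x c := by
  simp [jumpShift, hj, hk]

lemma tendsto_jumpShift (j k : Fin N) (x : Pt N) :
    Tendsto (fun δ => jumpShift j k δ x) (𝓝[>] 0) (𝓝 x) := by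
  have hcont : Continuous fun δ => jumpShift j k δ x := by
    unfold jumpShift
    fun_prop
  simpa [jumpShift] using (hcont.tendsto 0).mono_left nhdsWithin_le_nhds

lemma permPt_swap_jumpShift (hjk : j ≠ k) (hx : x j = x k) (δ : ℝ) :
    permPt (Equiv.swap j k) (jumpShift j k δ x) = jumpShift j k (-δ) x := by
  ext c
  simp only [permPt, Equiv.swap_inv, Equiv.swap_apply_def]
  split_ifs with hcj hck
  · simp [hcj, jumpShift_apply_right, jumpShift_apply_left hjk, hx, sub_eq_add_neg]
  · simp [hck, jumpShift_apply_right, jumpShift_apply_left hjk, hx, sub_eq_add_neg]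
  · rw [jumpShift_apply_of_ne hcj hck, jumpShift_apply_of_ne hcj hck]

lemma eventually_lt_iff_jumpShift (hjk : j ≠ k) (hx : x j = x k)
    (hsub : ∀ a b, a ≠ b → x a = x b → a = j ∧ b = k ∨ a = k ∧ b = j) :
    ∀ᶠ δ in 𝓝[>] 0, ∀ a b,
      jumpShift j k δ x a < jumpShift j k δ x b ↔ x a < x b ∨ a = k ∧ b = j := by
  simp only [eventually_all]
  intro a b
  have hy : ∀ c, Tendsto (fun δ => jumpShift j k δ x c) (𝓝[>] 0) (𝓝 (x c)) := fun c =>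
    ((continuous_apply c).tendsto x).comp (tendsto_jumpShift j k x)
  rcases lt_trichotomy (x a) (x b) with hab | hab | hab
  · exact ((hy a).eventually_lt (hy b) hab).mono fun δ hδ => iff_of_true hδ (.inl hab)
  · filter_upwards [self_mem_nhdsWithin] with δ (hδ : 0 < δ)
    rcases eq_or_ne a b with rfl | hne
    · exact iff_of_false (lt_irrefl _) (by rintro (h | ⟨rfl, h⟩) <;> simp_all)
    · rcases hsub a b hne hab with ⟨rfl, rfl⟩ | ⟨rfl, rfl⟩
      · rw [jumpShift_apply_left hjk, jumpShift_apply_right]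
        exact iff_of_false (by linarith) (by rintro (h | ⟨h, -⟩) <;> simp_all)
      · rw [jumpShift_apply_right, jumpShift_apply_left hjk]
        exact iff_of_true (by linarith) (.inr ⟨rfl, rfl⟩)
  · exact ((hy b).eventually_lt (hy a) hab).mono fun δ hδ =>
      iff_of_false hδ.not_gt (by rintro (h | ⟨rfl, rfl⟩) <;> linarith)

lemma exists_alcove_jumpShift (hjk : j ≠ k) (hx : x j = x k)
    (hsub : ∀ a b, a ≠ b → x a = x b → a = j ∧ b = k ∨ a = k ∧ b = j) :
    ∃ w : Equiv.Perm (Fin N),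
      (∀ᶠ δ in 𝓝[>] 0, jumpShift j k δ x ∈ alcove w) ∧ (w k : ℕ) = w j + 1 := by
  have hev := eventually_lt_iff_jumpShift hjk hx hsub
  obtain ⟨δ₁, hδ₁⟩ := hev.exists
  set y := jumpShift j k δ₁ x
  have hkj : y k < y j := (hδ₁ k j).mpr (.inr ⟨rfl, rfl⟩)
  have hinj : Function.Injective y := by
    intro a b hab
    by_contra hne
    rcases lt_trichotomy (x a) (x b) with h | h | h
    · exact ((hδ₁ a b).mpr (.inl h)).ne hab
    · rcases hsub a b hne h with ⟨rfl, rfl⟩ | ⟨rfl, rfl⟩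
      · exact hkj.ne hab.symm
      · exact hkj.ne hab
    · exact ((hδ₁ b a).mpr (.inl h)).ne hab.symm
  obtain ⟨w, hw⟩ := exists_mem_alcove hinj
  refine ⟨w, hev.mono fun δ hδ =>
    mem_alcove_of_lt_iff (fun a b => (hδ₁ a b).trans (hδ a b).symm) hw, ?_⟩
  have hanti : StrictAnti (permPt w y) := hw
  have hpos : ∀ a, permPt w y (w a) = y a := fun a => by simp [permPt]
  have hwjk : w j < w k := by rw [← hanti.lt_iff_gt, hpos, hpos]; exact hkj
  by_contra hadj
  have hlt : (w j : ℕ) + 1 < w k := by rw [Fin.lt_def] at hwjk; omega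
  set m : Fin N := ⟨w j + 1, hlt.trans (w k).isLt⟩
  have h1 : y (w⁻¹ m) < y j := by
    rw [← hpos j]; exact hanti (show w j < m by rw [Fin.lt_def]; simp [m])
  have h2 : y k < y (w⁻¹ m) := by
    rw [← hpos k]; exact hanti (show m < w k by rw [Fin.lt_def]; exact hlt)
  have hxa : x (w⁻¹ m) < x j := ((hδ₁ _ _).mp h1).resolve_right fun h => h2.ne (h.1 ▸ rfl)
  have hxa' : x k < x (w⁻¹ m) := ((hδ₁ _ _).mp h2).resolve_right fun h => h1.ne (h.2 ▸ rfl)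
  linarith

variable (γ : ℝ) {lam : Fin N → ℂ}

lemma pd_Bethe_jumpShift_neg (hjk : j ≠ k) (hx : x j = x k) (δ : ℝ) (l : Fin N) :
    pd l (Bethe γ lam) (jumpShift j k (-δ) x)
      = pd (Equiv.swap j k l) (Bethe γ lam) (jumpShift j k δ x) := by
  rw [← permPt_swap_jumpShift hjk hx, pd_of_permPt_invariant (Bethe_permPt γ lam _),
    permPt_permPt, Equiv.swap_mul_self]
  rfl

lemma tendsto_pd_sub_pd_Bethe (hlam : Function.Injective lam) (hx : x j = x k)
    {w : Equiv.Perm (Fin N)} (hw : ∀ᶠ δ in 𝓝[>] 0, jumpShift j k δ x ∈ alcove w)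
    (hadj : (w k : ℕ) = w j + 1) :
    Tendsto (fun δ => pd j (Bethe γ lam) (jumpShift j k δ x) - pd k (Bethe γ lam) (jumpShift j k δ x))
      (𝓝[>] 0) (𝓝 (γ * Bethe γ lam x)) := by
  have hlim : ∀ F : Fn N, Continuous F →
      Tendsto (fun δ => F (permPt w (jumpShift j k δ x))) (𝓝[>] 0) (𝓝 (F (permPt w x))) :=
    fun F hF => ((hF.comp (continuous_permPt w)).tendsto x).comp (tendsto_jumpShift j k x)
  have hcont : ∀ l, Continuous (pd l (betheWave γ lam)) := fun l => by
    rw [betheWave, pd_waveSum]; exact (contDiff_waveSum _ _).continuous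
  have hBx : Bethe γ lam x = betheWave γ lam (permPt w x) :=
    tendsto_nhds_unique (((continuous_Bethe γ lam).tendsto x).comp (tendsto_jumpShift j k x))
      ((hlim _ (contDiff_waveSum _ _).continuous).congr' (hw.mono fun _ hδ =>
        (Bethe_eq_betheWave_permPt (StrictAnti.antitone hδ)).symm))
  rw [hBx, ← pd_sub_pd_betheWave γ hlam hadj (by simp [permPt, hx])]
  refine ((hlim _ (hcont _)).sub (hlim _ (hcont _))).congr' ?_
  filter_upwards [hw] with δ hδ
  simp only [pd_congr_of_eventuallyEq (Bethe_eventuallyEq_of_mem_alcove hδ), pd_comp_permPt]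
  rfl

lemma satisfiesJump_Bethe (hlam : Function.Injective lam) : SatisfiesJump γ (Bethe γ lam) := by
  intro j k hjk x hx hreg
  have hsub : ∀ a b, a ≠ b → x a = x b → a = j ∧ b = k ∨ a = k ∧ b = j := by
    intro a b hne hab
    rcases hne.lt_or_gt with h | h
    · exact .inl (not_not.mp fun hc => hreg a b h hc hab)
    · exact .inr (not_not.mp fun hc => hreg b a h hc hab.symm).symm
  obtain ⟨w, hw, hadj⟩ := exists_alcove_jumpShift hjk.ne hx hsub
  simp only [pd_Bethe_jumpShift_neg γ hjk.ne hx, Equiv.swap_apply_left, Equiv.swap_apply_right]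
  rw [mul_assoc]
  exact ((tendsto_pd_sub_pd_Bethe γ hlam hx hw hadj).const_mul 2).congr fun δ => by ring

end Jump

theorem statement_7_general (N : ℕ) (γ : ℝ) (lam : Fin N → ℂ)
    (hdist : ∀ j k : Fin N, j ≠ k → lam j ≠ lam k) :
    Continuous (Bethe γ lam) ∧
    (∀ (w : Equiv.Perm (Fin N)) (x : Pt N), Bethe γ lam (permPt w x) = Bethe γ lam x) ∧
    (∀ w : Equiv.Perm (Fin N), ContDiffOn ℝ (⊤ : ℕ∞) (Bethe γ lam) (alcove w)) ∧
    (∀ x ∈ regPts N,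
      -(∑ j : Fin N, pd j (pd j (Bethe γ lam)) x)
        = (∑ j : Fin N, (lam j) ^ 2) * Bethe γ lam x) ∧
    SatisfiesJump γ (Bethe γ lam) :=
  ⟨continuous_Bethe γ lam, Bethe_permPt γ lam, contDiffOn_Bethe_alcove γ lam,
    fun _ hx => Bethe_helmholtz γ lam hx,
    satisfiesJump_Bethe γ (Function.injective_iff_pairwise_ne.mpr hdist)⟩

/-- for `λ` with pairwise distinct entries, the Bethe wavefunction `Ψ_λ` is
continuous, `S_N`-invariant, smooth on every alcove, satisfies the Helmholtz equation
with eigenvalue `∑_j λ_j²` on the regular vectors, and satisfies the derivative jump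
conditions with coupling `γ`. -/
theorem statement_7 (N : ℕ) (hN : 1 ≤ N) (γ : ℝ) (lam : Fin N → ℂ)
    (hdist : ∀ j k : Fin N, j ≠ k → lam j ≠ lam k) :
    Continuous (Bethe γ lam) ∧
    (∀ (w : Equiv.Perm (Fin N)) (x : Pt N), Bethe γ lam (permPt w x) = Bethe γ lam x) ∧
    (∀ w : Equiv.Perm (Fin N), ContDiffOn ℝ (⊤ : ℕ∞) (Bethe γ lam) (alcove w)) ∧
    (∀ x ∈ regPts N,
      -(∑ j : Fin N, pd j (pd j (Bethe γ lam)) x)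
        = (∑ j : Fin N, (lam j) ^ 2) * Bethe γ lam x) ∧
    SatisfiesJump γ (Bethe γ lam) :=
  statement_7_general N γ lam hdist

end
end

section
/- Fix an integer N ≥ 1, γ ∈ ℝ, μ ∈ ℂ, n ∈ {0, …, N}, and a tuple i = (i_1, …, i_n) of pairwise distinct elements of {1, …, N}. Then, with the convention that a transposition t of coordinates acts on functions g on ℝ^{N+1} by (t g)(x) = g(t x), one has the operator identity ê^+_{μ;i} = s_{1,2} ∘ s_{2,3} ∘ ⋯ ∘ s_{N,N+1} ∘ s_{i_1,i_2} ∘ s_{i_2,i_3} ∘ ⋯ ∘ s_{i_{n−1},i_n} ∘ s_{i_n,N+1} ∘ ê^-_{μ;i} on continuous functions ℝ^N → ℂ (for n = 0 the second block of transpositions is empty). -/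
open scoped BigOperators
open MeasureTheory Complex

noncomputable section

/-!
The product `s_{1,2} ⋯ s_{N,N+1}` is the cycle `k ↦ k + 1` (`finRotate`), and the product of the
transpositions of consecutive entries of `(i₁, …, i_n, N+1)` is the cyclic permutation of that
list (`List.formPerm`). Hence `σ` sends `(N+1, i₁, …, i_n)` to `(i₁+1, …, i_n+1, 1)` and every other
`k` to `k + 1`. After substituting `x ∘ σ`, the indicator and the integration limits of `ê⁻` become
those of `ê⁺`, and the weights `e^{iμ(x_{i_m} − y_m)}` differ from those of `ê⁺` only by constant
factors that telescope against the outer exponentials.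
-/

theorem List.map_formPerm_eq_rotate_one {α : Type*} [DecidableEq α] {l : List α}
    (hl : l.Nodup) : l.map l.formPerm = l.rotate 1 := by
  apply List.ext_getElem (by simp)
  intro i h₁ h₂
  simp only [List.getElem_map, List.getElem_rotate, List.formPerm_apply_getElem _ hl]

theorem List.map_formPerm_concat {α : Type*} [DecidableEq α] {a : α} {l : List α}
    (hl : (a :: l).Nodup) : (a :: l).map (l ++ [a]).formPerm = l ++ [a] := by
  rw [← List.formPerm_eq_of_isRotated hl (List.isRotated_concat a l).symm,
    List.map_formPerm_eq_rotate_one hl]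
  simp

theorem List.formPerm_finRange (n : ℕ) : (List.finRange n).formPerm = finRotate n := by
  cases n with
  | zero => exact Subsingleton.elim _ _
  | succ n =>
    ext i
    have := List.formPerm_apply_getElem _ (List.nodup_finRange (n + 1)) i (by simpa using i.2)
    simp only [List.getElem_finRange, List.length_finRange, Fin.cast_mk, Fin.eta] at this
    simp [this, finRotate_apply, Fin.val_add]

theorem prod_ofFn_swap_castSucc_succ (n : ℕ) :
    (List.ofFn fun k : Fin n => Equiv.swap k.castSucc k.succ).prod = finRotate (n + 1) := by
  rw [← List.formPerm_finRange, List.formPerm]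
  congr 1
  apply List.ext_getElem (by simp)
  intro i h₁ h₂
  simp

lemma adjSwaps_prod_eq_formPerm {M : ℕ} : ∀ L : List (Fin M), (adjSwaps L).prod = L.formPerm
  | [] => rfl
  | [_] => rfl
  | a :: b :: rest => by
      rw [adjSwaps, List.prod_cons, adjSwaps_prod_eq_formPerm (b :: rest), List.formPerm_cons_cons]

section ehatPerm

variable {N : ℕ} (l : List (Fin N))

def ehatPerm : Equiv.Perm (Fin (N + 1)) :=
  finRotate (N + 1) * (l.map Fin.castSucc ++ [Fin.last N]).formPerm

lemma map_ehatPerm_last_cons (hl : l.Nodup) :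
    (Fin.last N :: l.map Fin.castSucc).map (ehatPerm l) = l.map Fin.succ ++ [0] := by
  have hnd : (Fin.last N :: l.map Fin.castSucc).Nodup := by
    refine List.nodup_cons.2 ⟨?_, hl.map (Fin.castSucc_injective N)⟩
    simp [Fin.castSucc_ne_last]
  rw [ehatPerm, Equiv.Perm.coe_mul, ← List.map_map, List.map_formPerm_concat hnd]
  simp [Function.comp_def]

lemma ehatPerm_castSucc_of_notMem {k : Fin N} (hk : k ∉ l) :
    ehatPerm l k.castSucc = k.succ := by
  rw [ehatPerm, Equiv.Perm.mul_apply,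
    List.formPerm_apply_of_notMem (by simpa [Fin.castSucc_ne_last] using hk)]
  simp [finRotate_apply]

end ehatPerm

lemma cexp_I_mul_sub (μ : ℂ) (a y : ℝ) :
    cexp (I * μ * ((a - y : ℝ) : ℂ)) = cexp (I * μ * a) * cexp (-(I * μ * y)) := by
  rw [← Complex.exp_add]
  push_cast
  ring_nf

lemma ePlusAux_cons {N : ℕ} (μ : ℂ) (f : Fn N) (x : Pt (N + 1)) (i : Fin N)
    (rest : List (Fin N)) (z : Pt N) :
    ePlusAux μ f x (i :: rest) z =
      ∫ y in x ((rest.map Fin.succ).headD 0)..x i.succ,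
        cexp (I * μ * ((x i.succ - y : ℝ) : ℂ)) * ePlusAux μ f x rest (Function.update z i y) := by
  cases rest <;> rfl

lemma cexp_mul_eMinusAux_eq_cexp_mul_ePlusAux {N : ℕ} (μ : ℂ) (f : Fn N) (x x' : Pt (N + 1)) :
    ∀ (l : List (Fin N)) (ub : ℝ) (z z' : Pt N),
      (ub :: l.map fun i => x' i.castSucc) = (l.map Fin.succ ++ [0]).map x →
      (∀ j ∉ l, z j = z' j) →
      cexp (I * μ * ub) * eMinusAux μ f x' l ub z = cexp (I * μ * x 0) * ePlusAux μ f x l z'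
  | [], ub, z, z', hx', hz => by
      obtain rfl : ub = x 0 := by simpa using hx'
      obtain rfl : z = z' := funext fun j => hz j List.not_mem_nil
      rfl
  | i :: rest, ub, z, z', hx', hz => by
      simp only [List.map_cons, List.cons_append, List.cons.injEq] at hx'
      obtain ⟨rfl, hrest⟩ := hx'
      have hlower : x ((rest.map Fin.succ).headD 0) = x' i.castSucc := by
        cases rest with
        | nil => simpa using hrest.symm
        | cons j _ => simpa using (List.cons.inj hrest).1.symm
      have ih := fun y => cexp_mul_eMinusAux_eq_cexp_mul_ePlusAux μ f x x' rest (x' i.castSucc)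
        (Function.update z i y) (Function.update z' i y) (by simpa using hrest)
        (fun j hj => by by_cases hji : j = i <;> simp_all)
      rw [eMinusAux, ePlusAux_cons, hlower, ← intervalIntegral.integral_const_mul,
        ← intervalIntegral.integral_const_mul]
      refine intervalIntegral.integral_congr fun y _ => ?_
      simp only [cexp_I_mul_sub]
      linear_combination (cexp (I * μ * (x i.succ)) * cexp (-(I * μ * y))) * ih y

/-- A transposition `t` acts by `(t g)(x) = g(t x)`, so the composite of the transposition
operators sends `g` to `x ↦ g (x ∘ σ)`, with `σ` the product of the transpositions in the
same order. -/
theorem statement_8_general (N : ℕ) (μ : ℂ)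
    (l : List (Fin N)) (hl : l.Nodup) (f : Fn N) (x : Pt (N + 1)) :
    ehatPlus μ l f x =
      ehatMinus μ l f (fun j =>
        x ((((List.ofFn fun k : Fin N => Equiv.swap k.castSucc k.succ).prod *
              (adjSwaps (l.map Fin.castSucc ++ [Fin.last N])).prod)) j)) := by
  rw [prod_ofFn_swap_castSucc_succ, adjSwaps_prod_eq_formPerm]
  change _ = ehatMinus μ l f (x ∘ ehatPerm l)
  have hchain : (x (ehatPerm l (Fin.last N)) :: l.map fun i => x (ehatPerm l i.castSucc))
      = (l.map Fin.succ ++ [0]).map x := by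
    simpa [List.map_map, Function.comp_def] using
      congrArg (List.map x) (map_ehatPerm_last_cons l hl)
  have hmain := cexp_mul_eMinusAux_eq_cexp_mul_ePlusAux μ f x (x ∘ ehatPerm l) l _
    (fun j => x (ehatPerm l j.castSucc)) (fun j => x j.succ) hchain
    (fun j hj => by simp [ehatPerm_castSucc_of_notMem l hj])
  unfold ehatPlus ehatMinus
  simp only [Function.comp_apply]
  rw [hchain, mul_assoc (chainInd _), mul_assoc (chainInd _), hmain]
  simp [List.map_map, Function.comp_def]

/-- `ê⁺_{μ;i} = s_{1,2} ∘ ⋯ ∘ s_{N,N+1} ∘ s_{i₁,i₂} ∘ ⋯ ∘ s_{i_n,N+1} ∘ ê⁻_{μ;i}`,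
where a transposition `t` acts on functions `g` on `ℝ^{N+1}` by `(t g)(x) = g(t x)`.
Unwinding that convention, the composite of the transposition operators applied to
`ê⁻_{μ;i} f` evaluated at `x` is `(ê⁻_{μ;i} f)(x ∘ σ)` with
`σ = s_{1,2} ⋯ s_{N,N+1} s_{i₁,i₂} ⋯ s_{i_n,N+1}` (product of permutations). -/
theorem statement_8 (N : ℕ) (hN : 1 ≤ N) (γ : ℝ) (μ : ℂ)
    (l : List (Fin N)) (hl : l.Nodup) (f : Fn N) (hf : Continuous f) (x : Pt (N + 1)) :
    ehatPlus μ l f x =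
      ehatMinus μ l f (fun j =>
        x ((((List.ofFn fun k : Fin N => Equiv.swap k.castSucc k.succ).prod *
              (adjSwaps (l.map Fin.castSucc ++ [Fin.last N])).prod)) j)) :=
  statement_8_general N μ l hl f x

end
end
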